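/- arXiv:2104.04653 — 3 statements merged into one kernel-verified Lean document; each statement's English description precedes it below -/
import Mathlib

section
/- For every M > 0 there exists a unique inflection point s* ∈ (0,1) of f: f″(s*) = 0, f″(s) > 0 for all s ∈ [0, s*), and f″(s) < 0 for all s ∈ (s*, 1]. (This is the inflection point that delineates the trust regions in the inflection-point Newton strategy.) -/
/-!
Writing `D s = M s² + (1 - s)²`, one computes `f' = 2M(s - s²)/D²` and
`f'' = 2M g/D³` with `g s = (M + 1)(2s³ - 3s²) + 1`. Since `D > 0`, `f''` has the sign of `g`,
and `g' = 6(M + 1)s(s - 1) < 0` on `(0, 1)`, so `g` decreases strictly from `g 0 = 1` to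
`g 1 = -M`: it has exactly one zero in `(0, 1)`, positive before it and negative after it.
-/

open Set

theorem existsUnique_sign_change_of_strictAntiOn {g : ℝ → ℝ} {a b : ℝ} (hab : a ≤ b)
    (hcont : ContinuousOn g (Icc a b)) (hanti : StrictAntiOn g (Icc a b))
    (ha : 0 < g a) (hb : g b < 0) :
    ∃! x, x ∈ Ioo a b ∧ g x = 0 ∧ (∀ s ∈ Ico a x, 0 < g s) ∧ (∀ s ∈ Ioc x b, g s < 0) := by
  obtain ⟨x, hx, hgx⟩ := intermediate_value_Ioo' hab hcont ⟨hb, ha⟩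
  have hxIcc : x ∈ Icc a b := Ioo_subset_Icc_self hx
  refine ⟨x, ⟨hx, hgx, fun s hs ↦ ?_, fun s hs ↦ ?_⟩, ?_⟩
  · exact hgx ▸ hanti ⟨hs.1, hs.2.le.trans hx.2.le⟩ hxIcc hs.2
  · exact hgx ▸ hanti hxIcc ⟨hx.1.le.trans hs.1.le, hs.2⟩ hs.1
  · rintro y ⟨hy, hgy, -, -⟩
    exact hanti.injOn (Ioo_subset_Icc_self hy) hxIcc (hgy.trans hgx.symm)

namespace FractionalFlow

def denom (M s : ℝ) : ℝ := M * s ^ 2 + (1 - s) ^ 2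

noncomputable def fracFlow (M s : ℝ) : ℝ := M * s ^ 2 / denom M s

def inflectionPoly (M s : ℝ) : ℝ := (M + 1) * (2 * s ^ 3 - 3 * s ^ 2) + 1

variable {M : ℝ}

theorem denom_pos (hM : 0 < M) (s : ℝ) : 0 < denom M s := by
  rcases eq_or_ne s 0 with rfl | hs
  · simp [denom]
  · have : 0 < M * s ^ 2 := by positivity
    unfold denom
    positivity

theorem hasDerivAt_denom (M s : ℝ) : HasDerivAt (denom M) (2 * M * s - 2 * (1 - s)) s :=
  (((hasDerivAt_pow 2 s).const_mul M).add (((hasDerivAt_id s).const_sub 1).pow 2)).congr_deriv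
    (by simp only [Nat.cast_ofNat, Nat.add_one_sub_one, pow_one, id_eq]; ring)

theorem hasDerivAt_fracFlow (hM : 0 < M) (s : ℝ) :
    HasDerivAt (fracFlow M) (2 * M * (s - s ^ 2) / denom M s ^ 2) s := by
  refine (((hasDerivAt_pow 2 s).const_mul M).div (hasDerivAt_denom M s)
    (denom_pos hM s).ne').congr_deriv ?_
  simp only [denom]
  ring

theorem deriv_fracFlow (hM : 0 < M) :
    deriv (fracFlow M) = fun s ↦ 2 * M * (s - s ^ 2) / denom M s ^ 2 :=
  funext fun s ↦ (hasDerivAt_fracFlow hM s).deriv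

theorem deriv_deriv_fracFlow (hM : 0 < M) (s : ℝ) :
    deriv (deriv (fracFlow M)) s = 2 * M / denom M s ^ 3 * inflectionPoly M s := by
  have hD := (denom_pos hM s).ne'
  rw [deriv_fracFlow hM]
  refine ((((hasDerivAt_id s).sub (hasDerivAt_pow 2 s)).const_mul (2 * M)).div
    ((hasDerivAt_denom M s).pow 2) (pow_ne_zero 2 hD)).deriv.trans ?_
  simp only [Pi.pow_apply, Pi.sub_apply, id]
  field_simp
  simp only [denom, inflectionPoly]
  ring

theorem sign_deriv_deriv_fracFlow (hM : 0 < M) (s : ℝ) :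
    SignType.sign (deriv (deriv (fracFlow M)) s) = SignType.sign (inflectionPoly M s) := by
  rw [deriv_deriv_fracFlow hM, sign_mul,
    sign_pos (div_pos (by positivity) (pow_pos (denom_pos hM s) 3)), one_mul]

theorem hasDerivAt_inflectionPoly (M s : ℝ) :
    HasDerivAt (inflectionPoly M) ((M + 1) * (6 * (s ^ 2 - s))) s :=
  (((((hasDerivAt_pow 3 s).const_mul 2).sub ((hasDerivAt_pow 2 s).const_mul 3)).const_mul
    (M + 1)).add_const 1).congr_deriv (by push_cast; ring)

theorem strictAntiOn_inflectionPoly (hM : -1 < M) : StrictAntiOn (inflectionPoly M) (Icc 0 1) := by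
  refine strictAntiOn_of_deriv_neg (convex_Icc 0 1)
    (fun s _ ↦ (hasDerivAt_inflectionPoly M s).continuousAt.continuousWithinAt) fun s hs ↦ ?_
  rw [interior_Icc] at hs
  rw [(hasDerivAt_inflectionPoly M s).deriv]
  have : s ^ 2 < s := by nlinarith [hs.1, hs.2]
  nlinarith

end FractionalFlow

open FractionalFlow in
/-- For every `M > 0` the Buckley–Leverett fractional flow function
`f s = M s² / (M s² + (1-s)²)` has a unique inflection point `s* ∈ (0,1)`:
`f'' s* = 0`, `f'' s > 0` for all `s ∈ [0, s*)`, and `f'' s < 0` for all `s ∈ (s*, 1]`. -/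
theorem fractional_flow_unique_inflection_point
    (M : ℝ) (hM : 0 < M)
    (f : ℝ → ℝ) (hf : ∀ s, f s = M * s ^ 2 / (M * s ^ 2 + (1 - s) ^ 2)) :
    ∃! sstar : ℝ, sstar ∈ Set.Ioo (0 : ℝ) 1 ∧
      deriv (deriv f) sstar = 0 ∧
      (∀ s ∈ Set.Ico (0 : ℝ) sstar, 0 < deriv (deriv f) s) ∧
      (∀ s ∈ Set.Ioc sstar (1 : ℝ), deriv (deriv f) s < 0) := by
  obtain rfl : f = fracFlow M := funext hf
  have hroot := existsUnique_sign_change_of_strictAntiOn zero_le_one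
    (fun s _ ↦ (hasDerivAt_inflectionPoly M s).continuousAt.continuousWithinAt)
    (strictAntiOn_inflectionPoly (by linarith)) (by norm_num [inflectionPoly])
    (by norm_num [inflectionPoly, hM])
  have hzero (s : ℝ) : deriv (deriv (fracFlow M)) s = 0 ↔ inflectionPoly M s = 0 := by
    rw [← sign_eq_zero_iff, sign_deriv_deriv_fracFlow hM, sign_eq_zero_iff]
  have hpos (s : ℝ) : 0 < deriv (deriv (fracFlow M)) s ↔ 0 < inflectionPoly M s := by
    rw [← sign_eq_one_iff, sign_deriv_deriv_fracFlow hM, sign_eq_one_iff]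
  have hneg (s : ℝ) : deriv (deriv (fracFlow M)) s < 0 ↔ inflectionPoly M s < 0 := by
    rw [← sign_eq_neg_one_iff, sign_deriv_deriv_fracFlow hM, sign_eq_neg_one_iff]
  simpa only [hzero, hpos, hneg] using hroot
end

section
/- If 0 < M ≤ 10, then for every s ∈ [0,1] one has |f′(s)(1−s)² − 2 f(s)(1−s)| ≤ 2. -/
/-!
The derivative of the fractional flow is `f' = 2 M s (1-s) / D²` with `D = M s² + (1-s)²`, so
`f'(1-s)² - 2 f (1-s) = 2 M s (1-s) ((1-s)³ - M s³) / D²`, and the claim is `|M s (1-s) ((1-s)³ - M s³)| ≤ D²`.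
From below this holds for every `M ≥ 0`, since `M² s⁴ (1-s) ≤ (M s²)² ≤ D²`. From above it reduces to
`M s (1-s)² ((1-s)² - 2 s) ≤ (1-s)⁴`, which is where `M ≤ 10` enters: `10 s ((1-s)² - 2 s) ≤ (1-s)²` on `[0,1]`.
-/

namespace BuckleyLeverett

noncomputable def flux (M s : ℝ) : ℝ := M * s ^ 2 / (M * s ^ 2 + (1 - s) ^ 2)

variable {M : ℝ}

theorem denom_pos (hM : 0 < M) (s : ℝ) : 0 < M * s ^ 2 + (1 - s) ^ 2 := by
  rcases eq_or_ne s 0 with rfl | hs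
  · norm_num
  · have : 0 < M * s ^ 2 := by positivity
    positivity

theorem hasDerivAt_flux (hM : 0 < M) (s : ℝ) :
    HasDerivAt (flux M) (2 * M * s * (1 - s) / (M * s ^ 2 + (1 - s) ^ 2) ^ 2) s := by
  have hnum : HasDerivAt (fun x : ℝ => M * x ^ 2) (M * (2 * s)) s := by
    simpa using (hasDerivAt_pow 2 s).const_mul M
  have hsq : HasDerivAt (fun x : ℝ => (1 - x) ^ 2) (2 * (1 - s) * (-1)) s := by
    simpa using ((hasDerivAt_id s).const_sub 1).fun_pow 2
  refine (hnum.fun_div (hnum.fun_add hsq) (denom_pos hM s).ne').congr_deriv ?_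
  field_simp
  ring

theorem deriv_flux_mul_sub (hM : 0 < M) (s : ℝ) :
    deriv (flux M) s * (1 - s) ^ 2 - 2 * flux M s * (1 - s) =
      2 * (M * s * (1 - s) * ((1 - s) ^ 3 - M * s ^ 3)) / (M * s ^ 2 + (1 - s) ^ 2) ^ 2 := by
  have hD := (denom_pos hM s).ne'
  rw [(hasDerivAt_flux hM s).deriv, flux]
  field_simp
  ring

theorem neg_le_mul_cubic_sub (hM : 0 ≤ M) {s : ℝ} (hs : s ∈ Set.Icc (0 : ℝ) 1) :
    -(M * s ^ 2 + (1 - s) ^ 2) ^ 2 ≤ M * s * (1 - s) * ((1 - s) ^ 3 - M * s ^ 3) := by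
  obtain ⟨hs0, hs1⟩ := hs
  have hu : 0 ≤ 1 - s := by linarith
  have hdrop : M ^ 2 * s ^ 4 * (1 - s) ≤ (M * s ^ 2) ^ 2 := by
    nlinarith [sq_nonneg (M * s ^ 2)]
  nlinarith [mul_nonneg (mul_nonneg hM hs0) (pow_nonneg hu 4),
    mul_nonneg (mul_nonneg hM (sq_nonneg s)) (sq_nonneg (1 - s)), sq_nonneg (1 - s)]

theorem ten_mul_mul_sq_sub_le {s : ℝ} (hs : s ∈ Set.Icc (0 : ℝ) 1) :
    10 * s * ((1 - s) ^ 2 - 2 * s) ≤ (1 - s) ^ 2 := by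
  obtain ⟨hs0, hs1⟩ := hs
  nlinarith [sq_nonneg (1 - 6 * s), mul_nonneg hs0 (mul_nonneg hs0 (by linarith : (0:ℝ) ≤ 1 - s)),
    pow_nonneg hs0 3]

theorem mul_mul_sq_sub_le (hM0 : 0 ≤ M) (hM10 : M ≤ 10) {s : ℝ} (hs : s ∈ Set.Icc (0 : ℝ) 1) :
    M * s * ((1 - s) ^ 2 - 2 * s) ≤ (1 - s) ^ 2 := by
  rcases le_total ((1 - s) ^ 2) (2 * s) with h | h
  · nlinarith [mul_nonneg hM0 hs.1, sq_nonneg (1 - s)]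
  · calc M * s * ((1 - s) ^ 2 - 2 * s) ≤ 10 * s * ((1 - s) ^ 2 - 2 * s) := by
          have hs0 := hs.1
          have hgap : 0 ≤ (1 - s) ^ 2 - 2 * s := by linarith
          gcongr
      _ ≤ (1 - s) ^ 2 := ten_mul_mul_sq_sub_le hs

theorem mul_cubic_sub_le (hM0 : 0 ≤ M) (hM10 : M ≤ 10) {s : ℝ} (hs : s ∈ Set.Icc (0 : ℝ) 1) :
    M * s * (1 - s) * ((1 - s) ^ 3 - M * s ^ 3) ≤ (M * s ^ 2 + (1 - s) ^ 2) ^ 2 := by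
  have hu : 0 ≤ 1 - s := by linarith [hs.2]
  nlinarith [mul_le_mul_of_nonneg_right (mul_mul_sq_sub_le hM0 hM10 hs) (sq_nonneg (1 - s)),
    mul_nonneg (mul_nonneg (sq_nonneg M) (pow_nonneg hs.1 4)) hu, sq_nonneg (M * s ^ 2)]

theorem abs_deriv_flux_mul_sub_le (hM0 : 0 < M) (hM10 : M ≤ 10) {s : ℝ}
    (hs : s ∈ Set.Icc (0 : ℝ) 1) :
    |deriv (flux M) s * (1 - s) ^ 2 - 2 * flux M s * (1 - s)| ≤ 2 := by
  rw [deriv_flux_mul_sub hM0, abs_div, abs_of_pos (pow_pos (denom_pos hM0 s) 2),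
    div_le_iff₀ (pow_pos (denom_pos hM0 s) 2), abs_le]
  constructor
  · linarith [neg_le_mul_cubic_sub hM0.le hs]
  · linarith [mul_cubic_sub_le hM0.le hM10 hs]

end BuckleyLeverett

/-- For the Buckley–Leverett fractional flow `f s = M s² / (M s² + (1-s)²)`:
if `0 < M ≤ 10` then for every `s ∈ [0,1]`, `|f'(s)(1−s)² − 2 f(s)(1−s)| ≤ 2`. -/
theorem gravity_flux_derivative_bound
    (M : ℝ) (hM0 : 0 < M) (hM10 : M ≤ 10)
    (f : ℝ → ℝ) (hf : ∀ s, f s = M * s ^ 2 / (M * s ^ 2 + (1 - s) ^ 2)) :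
    ∀ s ∈ Set.Icc (0 : ℝ) 1,
      |deriv f s * (1 - s) ^ 2 - 2 * f s * (1 - s)| ≤ 2 := by
  obtain rfl : f = BuckleyLeverett.flux M := funext hf
  exact fun s hs => BuckleyLeverett.abs_deriv_flux_mul_sub_le hM0 hM10 hs
end

section
/- Let 0 < M ≤ 10, μ_o > 0, u ∈ ℝ, κ ≥ 0 and c ∈ ℝ, and define the scalar flux 𝔉(s) = f(s) (u + κ (1−s)² c / μ_o). Then for every s ∈ [0,1], |𝔉′(s)| ≤ |f′(s)| |u| + 2 κ |c| / μ_o. (This is the derivative bound that determines the CFL time-step restriction for the two-phase flow with gravity, with κ the permeability, c = (ρ_w − ρ_o) g ∇h, and κ(1−s)²/μ_o = κ λ_o(s) the gravitational mobility term.) -/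
/-!
Writing `t = 1 - s` and `D = M s² + t²`, the product rule splits the flux derivative as
`𝔉' = f' u + (κ c / μo) (f t²)'`, and `(f t²)' = 2 M s t (t³ - M s³) / D²`.
So it suffices that `|M s t (t³ - M s³)| ≤ D²`. The lower side is crude, since
`M s t (M s³ - t³) ≤ M² s⁴`. On the upper side `M s t (t³ - M s³) ≤ M s t⁴`, and
`M s t⁴ ≤ D²` follows from `D² ≥ 4 M s² t²` when `t² ≤ 4 s`; when `t² > 4 s` the saturation
`s` is small, and the bound reduces to a one-variable polynomial inequality at the extreme
mobility ratio `M = 10`.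
-/

open Set

noncomputable def buckleyLeverett (M s : ℝ) : ℝ :=
  M * s ^ 2 / (M * s ^ 2 + (1 - s) ^ 2)

lemma buckleyLeverett_denom_pos {M : ℝ} (hM : 0 < M) (s : ℝ) :
    0 < M * s ^ 2 + (1 - s) ^ 2 := by
  rcases eq_or_ne s 0 with rfl | hs
  · norm_num
  · have : 0 < M * s ^ 2 := by positivity
    positivity

lemma hasDerivAt_one_sub_sq (s : ℝ) :
    HasDerivAt (fun x : ℝ => (1 - x) ^ 2) (-(2 * (1 - s))) s := by
  simpa using ((hasDerivAt_id s).const_sub 1).fun_pow 2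

lemma hasDerivAt_buckleyLeverett {M : ℝ} (hM : 0 < M) (s : ℝ) :
    HasDerivAt (buckleyLeverett M)
      (2 * M * s * (1 - s) / (M * s ^ 2 + (1 - s) ^ 2) ^ 2) s := by
  have hD := buckleyLeverett_denom_pos hM s
  have hnum : HasDerivAt (fun x : ℝ => M * x ^ 2) (M * (2 * s)) s := by
    simpa using (hasDerivAt_pow 2 s).const_mul M
  have hsq := hasDerivAt_one_sub_sq s
  refine (hnum.fun_div (hnum.fun_add hsq) hD.ne').congr_deriv ?_
  field_simp
  ring

lemma hasDerivAt_buckleyLeverett_mul_sq_one_sub {M : ℝ} (hM : 0 < M) (s : ℝ) :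
    HasDerivAt (fun x => buckleyLeverett M x * (1 - x) ^ 2)
      (2 * M * s * (1 - s) * ((1 - s) ^ 3 - M * s ^ 3) / (M * s ^ 2 + (1 - s) ^ 2) ^ 2) s := by
  have hD := buckleyLeverett_denom_pos hM s
  have hsq := hasDerivAt_one_sub_sq s
  refine ((hasDerivAt_buckleyLeverett hM s).fun_mul hsq).congr_deriv ?_
  rw [buckleyLeverett]
  field_simp
  ring

lemma mul_mul_sub_le_sq_add_sq {M s t : ℝ} (hM : 0 ≤ M) (hs : 0 ≤ s) (ht : t ≤ 1) :
    M * s * t * (M * s ^ 3 - t ^ 3) ≤ (M * s ^ 2 + t ^ 2) ^ 2 :=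
  calc M * s * t * (M * s ^ 3 - t ^ 3) ≤ (M * s ^ 2) ^ 2 * t := by
        nlinarith [show 0 ≤ M * s * t ^ 4 by positivity]
    _ ≤ (M * s ^ 2) ^ 2 := mul_le_of_le_one_right (by positivity) ht
    _ ≤ (M * s ^ 2 + t ^ 2) ^ 2 := by gcongr; nlinarith [sq_nonneg t]

lemma ten_mul_sq_one_sub_mul_le {s : ℝ} (hs0 : 0 ≤ s) (hs1 : s ≤ 1) :
    10 * s * (1 - s) ^ 2 * ((1 - s) ^ 2 - 4 * s) ≤ ((1 - s) ^ 2 - 10 * s ^ 2) ^ 2 := by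
  nlinarith [sq_nonneg s, sq_nonneg (1 - s), mul_nonneg hs0 (sub_nonneg.2 hs1),
    sq_nonneg (s * (1 - s)), sq_nonneg (1 - 6 * s), pow_nonneg hs0 3]

lemma mul_pow_four_le_sq_add_sq {M s : ℝ} (hM0 : 0 < M) (hM10 : M ≤ 10)
    (hs0 : 0 ≤ s) (hs1 : s ≤ 1) :
    M * s * (1 - s) ^ 4 ≤ (M * s ^ 2 + (1 - s) ^ 2) ^ 2 := by
  set t := 1 - s
  -- `(M s² + t²)² = (t² - M s²)² + 4 M s² t²`
  rcases le_or_gt (t ^ 2) (4 * s) with hsmall | hlarge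
  · nlinarith [mul_nonneg (mul_nonneg (mul_nonneg hM0.le hs0) (sq_nonneg t))
      (sub_nonneg.2 hsmall), sq_nonneg (M * s ^ 2 - t ^ 2)]
  · have h10 : 10 * s ^ 2 ≤ t ^ 2 := by nlinarith
    have hMs : M * s ^ 2 ≤ 10 * s ^ 2 := by nlinarith [sq_nonneg s]
    have hgap : 0 ≤ s * t ^ 2 * (t ^ 2 - 4 * s) := by
      have := sq_nonneg t
      have : 0 ≤ t ^ 2 - 4 * s := by linarith
      positivity
    have hscale : M * s * t ^ 2 * (t ^ 2 - 4 * s) ≤ 10 * s * t ^ 2 * (t ^ 2 - 4 * s) := by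
      nlinarith
    have hsq : (t ^ 2 - 10 * s ^ 2) ^ 2 ≤ (t ^ 2 - M * s ^ 2) ^ 2 := by
      gcongr
    nlinarith [ten_mul_sq_one_sub_mul_le hs0 hs1]

lemma abs_deriv_buckleyLeverett_mul_sq_one_sub_le_two {M s : ℝ} (hM0 : 0 < M) (hM10 : M ≤ 10)
    (hs : s ∈ Icc 0 1) :
    |deriv (fun x => buckleyLeverett M x * (1 - x) ^ 2) s| ≤ 2 := by
  obtain ⟨hs0, hs1⟩ := hs
  rw [(hasDerivAt_buckleyLeverett_mul_sq_one_sub hM0 s).deriv]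
  have hD := buckleyLeverett_denom_pos hM0 s
  rw [abs_le, le_div_iff₀ (by positivity), div_le_iff₀ (by positivity)]
  have hlower := mul_mul_sub_le_sq_add_sq hM0.le hs0 (sub_le_self 1 hs0)
  have hupper := mul_pow_four_le_sq_add_sq hM0 hM10 hs0 hs1
  have hdrop : 0 ≤ M ^ 2 * s ^ 4 * (1 - s) := by
    have := sub_nonneg.2 hs1
    positivity
  constructor <;> nlinarith

/-- CFL derivative bound for the scalar flux with gravity. Let `0 < M ≤ 10`, `μo > 0`,
`u ∈ ℝ`, `κ ≥ 0`, `c ∈ ℝ`, and `𝔉 s = f(s)(u + κ (1−s)² c / μo)` with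
`f s = M s² / (M s² + (1-s)²)`. Then for every `s ∈ [0,1]`,
`|𝔉'(s)| ≤ |f'(s)| |u| + 2 κ |c| / μo`. -/
theorem cfl_flux_derivative_bound
    (M : ℝ) (hM0 : 0 < M) (hM10 : M ≤ 10)
    (μo : ℝ) (hμo : 0 < μo)
    (u κ c : ℝ) (hκ : 0 ≤ κ)
    (f : ℝ → ℝ) (hf : ∀ s, f s = M * s ^ 2 / (M * s ^ 2 + (1 - s) ^ 2))
    (𝔉 : ℝ → ℝ) (h𝔉 : ∀ s, 𝔉 s = f s * (u + κ * (1 - s) ^ 2 * c / μo)) :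
    ∀ s ∈ Set.Icc (0 : ℝ) 1,
      |deriv 𝔉 s| ≤ |deriv f s| * |u| + 2 * κ * |c| / μo := by
  intro s hs
  have hf_eq : f = buckleyLeverett M := funext hf
  subst hf_eq
  have h𝔉_eq : 𝔉 = fun x =>
      u * buckleyLeverett M x + κ * c / μo * (buckleyLeverett M x * (1 - x) ^ 2) :=
    funext fun x => by rw [h𝔉]; ring
  set g := fun x => buckleyLeverett M x * (1 - x) ^ 2
  have hderiv : deriv 𝔉 s = u * deriv (buckleyLeverett M) s + κ * c / μo * deriv g s := by
    have hf_diff := (hasDerivAt_buckleyLeverett hM0 s).differentiableAt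
    have hg_diff := (hasDerivAt_buckleyLeverett_mul_sq_one_sub hM0 s).differentiableAt
    rw [h𝔉_eq]
    exact ((hf_diff.hasDerivAt.const_mul u).fun_add (hg_diff.hasDerivAt.const_mul _)).deriv
  have hcoeff : |κ * c / μo| = κ * |c| / μo := by
    rw [abs_div, abs_mul, abs_of_nonneg hκ, abs_of_pos hμo]
  calc |deriv 𝔉 s| ≤ |u| * |deriv (buckleyLeverett M) s| + κ * |c| / μo * |deriv g s| := by
        rw [hderiv, ← abs_mul, ← hcoeff, ← abs_mul]
        exact abs_add_le _ _
    _ ≤ |deriv (buckleyLeverett M) s| * |u| + κ * |c| / μo * 2 := by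
        rw [mul_comm |u|]
        gcongr
        exact abs_deriv_buckleyLeverett_mul_sq_one_sub_le_two hM0 hM10 hs
    _ = _ := by ring
end
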